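/- Let n, m, p ≥ 1, let A ∈ ℝ^{n×n}, B ∈ ℝ^{n×m}, C ∈ ℝ^{p×n}, D ∈ ℝ^{p×m}, let γ > 0, and let P ∈ ℝ^{n×n} be symmetric positive definite satisfying the bounded-real LMI with gain γ. Then there exists ε > 0 such that for every input sequence u : ℕ → ℝ^m and every horizon T ∈ ℕ, the output of the DT-LTI system satisfies ∑_{k=0}^{T−1} ‖z_k‖² ≤ (γ² − ε) ∑_{k=0}^{T−1} ‖u_k‖²; in particular the ℓ₂-gain of the system is strictly smaller than γ. -/

import Mathlib

open Matrix

/-- Squared Euclidean norm of a vector in `ℝ^d`. -/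
def sqNorm {d : ℕ} (v : Fin d → ℝ) : ℝ := ∑ i, v i ^ 2

/-- State trajectory of the DT-LTI system `h_{k+1} = A h_k + B u_k`, `h_0 = 0`. -/
noncomputable def ltiState {n m : ℕ} (A : Matrix (Fin n) (Fin n) ℝ)
    (B : Matrix (Fin n) (Fin m) ℝ) (u : ℕ → Fin m → ℝ) : ℕ → Fin n → ℝ
  | 0 => 0
  | k + 1 => A.mulVec (ltiState A B u k) + B.mulVec (u k)

/-- Output trajectory `z_k = C h_k + D u_k` of the DT-LTI system. -/
noncomputable def ltiOutput {n m p : ℕ} (A : Matrix (Fin n) (Fin n) ℝ)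
    (B : Matrix (Fin n) (Fin m) ℝ) (C : Matrix (Fin p) (Fin n) ℝ)
    (D : Matrix (Fin p) (Fin m) ℝ) (u : ℕ → Fin m → ℝ) (k : ℕ) : Fin p → ℝ :=
  C.mulVec (ltiState A B u k) + D.mulVec (u k)

/-!
The LMI says that the quadratic form of the block matrix at `(h, u)` is at most
`-ε (‖h‖² + ‖u‖²)` for some `ε > 0` (the least eigenvalue of its negative). At a state `h`
and input `u` of the system, that quadratic form equals
`V(A h + B u) - V(h) + ‖C h + D u‖² - γ² ‖u‖²` with the storage function `V(x) = xᵀ P x`,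
so every step obeys the dissipation inequality `‖z_k‖² + V(h_{k+1}) - V(h_k) ≤ (γ² - ε) ‖u_k‖²`.
Summing telescopes the storage terms; `V(h_0) = 0` and `V(h_T) ≥ 0` since `P` is positive
definite.
-/

theorem Matrix.PosDef.exists_pos_mul_dotProduct_self_le {ι : Type*} [Fintype ι] [DecidableEq ι]
    {N : Matrix ι ι ℝ} (hN : N.PosDef) : ∃ ε > 0, ∀ x : ι → ℝ, ε * (x ⬝ᵥ x) ≤ x ⬝ᵥ N *ᵥ x := by
  rcases isEmpty_or_nonempty ι with _ | _
  · exact ⟨1, one_pos, fun x => by simp [dotProduct]⟩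
  obtain ⟨i₀, hmin⟩ := Finite.exists_min hN.1.eigenvalues
  set c := hN.1.eigenvalues i₀
  set U : Matrix ι ι ℝ := (hN.1.eigenvectorUnitary : Matrix ι ι ℝ)
  have hshift : N - c • 1 = U * diagonal (fun i => hN.1.eigenvalues i - c) * Uᴴ := by
    have hUU : U * Uᴴ = 1 := Unitary.coe_mul_star_self hN.1.eigenvectorUnitary
    have hspec : N = U * diagonal hN.1.eigenvalues * Uᴴ := hN.1.spectral_theorem
    rw [← diagonal_sub hN.1.eigenvalues (fun _ => c), mul_sub, sub_mul, ← hspec,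
      ← smul_one_eq_diagonal, mul_smul_comm, mul_one, smul_mul_assoc, hUU]
  have hpsd : (N - c • 1).PosSemidef := by
    rw [hshift]
    exact (posSemidef_diagonal_iff.2 fun i => sub_nonneg.2 (hmin i)).mul_mul_conjTranspose_same U
  refine ⟨c, hN.eigenvalues_pos i₀, fun x => ?_⟩
  have := hpsd.dotProduct_mulVec_nonneg x
  rw [star_trivial, sub_mulVec, smul_mulVec, one_mulVec, dotProduct_sub, dotProduct_smul,
    smul_eq_mul] at this
  linarith

theorem sum_range_le_sum_of_dissipation {a b V : ℕ → ℝ} {T : ℕ}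
    (hstep : ∀ k, a k + (V (k + 1) - V k) ≤ b k) (hV₀ : V 0 = 0) (hVT : 0 ≤ V T) :
    ∑ k ∈ Finset.range T, a k ≤ ∑ k ∈ Finset.range T, b k := by
  have := Finset.sum_le_sum fun k (_ : k ∈ Finset.range T) => hstep k
  rw [Finset.sum_add_distrib, Finset.sum_range_sub, hV₀] at this
  linarith

lemma sqNorm_eq_dotProduct_self {d : ℕ} (v : Fin d → ℝ) : sqNorm v = v ⬝ᵥ v := by
  simp [sqNorm, dotProduct, sq]

section BoundedReal

variable {n m p : Type*} [Fintype n] [Fintype m] [Fintype p] [DecidableEq m]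
  (A : Matrix n n ℝ) (B : Matrix n m ℝ) (C : Matrix p n ℝ) (D : Matrix p m ℝ)
  (P : Matrix n n ℝ) (γ : ℝ)

def boundedRealMatrix : Matrix (n ⊕ m) (n ⊕ m) ℝ :=
  fromBlocks (Aᵀ * P * A - P + Cᵀ * C) (Aᵀ * P * B + Cᵀ * D)
    (Bᵀ * P * A + Dᵀ * C) (Bᵀ * P * B + Dᵀ * D - γ ^ 2 • 1)

theorem sumElim_dotProduct_boundedRealMatrix_mulVec (h : n → ℝ) (v : m → ℝ) :
    Sum.elim h v ⬝ᵥ boundedRealMatrix A B C D P γ *ᵥ Sum.elim h v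
      = (A *ᵥ h + B *ᵥ v) ⬝ᵥ P *ᵥ (A *ᵥ h + B *ᵥ v) - h ⬝ᵥ P *ᵥ h
        + (C *ᵥ h + D *ᵥ v) ⬝ᵥ (C *ᵥ h + D *ᵥ v) - γ ^ 2 * (v ⬝ᵥ v) := by
  simp only [boundedRealMatrix, fromBlocks_mulVec, sumElim_dotProduct_sumElim, add_mulVec,
    sub_mulVec, smul_mulVec, one_mulVec, ← mulVec_mulVec, dotProduct_transpose_mulVec,
    dotProduct_add, add_dotProduct, dotProduct_sub, dotProduct_smul, smul_eq_mul,
    Sum.elim_comp_inl, Sum.elim_comp_inr, mulVec_add]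
  simp only [dotProduct_comm (P *ᵥ _)]
  ring

theorem dissipation_ineq_of_boundedRealMatrix {ε : ℝ} (hε : 0 ≤ ε)
    (hLMI : ∀ w, ε * (w ⬝ᵥ w) ≤ w ⬝ᵥ (-boundedRealMatrix A B C D P γ) *ᵥ w)
    (h : n → ℝ) (v : m → ℝ) :
    (C *ᵥ h + D *ᵥ v) ⬝ᵥ (C *ᵥ h + D *ᵥ v)
        + ((A *ᵥ h + B *ᵥ v) ⬝ᵥ P *ᵥ (A *ᵥ h + B *ᵥ v) - h ⬝ᵥ P *ᵥ h)
      ≤ (γ ^ 2 - ε) * (v ⬝ᵥ v) := by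
  have hw := hLMI (Sum.elim h v)
  rw [neg_mulVec, dotProduct_neg, sumElim_dotProduct_boundedRealMatrix_mulVec,
    sumElim_dotProduct_sumElim] at hw
  have hh : 0 ≤ h ⬝ᵥ h := by simpa using dotProduct_star_self_nonneg h
  nlinarith [mul_nonneg hε hh]

end BoundedReal

theorem stmt2_general {n m p : ℕ}
    (A : Matrix (Fin n) (Fin n) ℝ) (B : Matrix (Fin n) (Fin m) ℝ)
    (C : Matrix (Fin p) (Fin n) ℝ) (D : Matrix (Fin p) (Fin m) ℝ)
    (γ : ℝ) (P : Matrix (Fin n) (Fin n) ℝ) (hP : P.PosDef)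
    (hLMI : (-(Matrix.fromBlocks
        (Aᵀ * P * A - P + Cᵀ * C) (Aᵀ * P * B + Cᵀ * D)
        (Bᵀ * P * A + Dᵀ * C) (Bᵀ * P * B + Dᵀ * D - γ ^ 2 • 1))).PosDef) :
    ∃ ε > 0, ∀ (u : ℕ → Fin m → ℝ) (T : ℕ),
      ∑ k ∈ Finset.range T, sqNorm (ltiOutput A B C D u k)
        ≤ (γ ^ 2 - ε) * ∑ k ∈ Finset.range T, sqNorm (u k) := by
  obtain ⟨ε, hε, hquad⟩ := hLMI.exists_pos_mul_dotProduct_self_le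
  refine ⟨ε, hε, fun u T => ?_⟩
  rw [Finset.mul_sum]
  refine sum_range_le_sum_of_dissipation
    (V := fun k => ltiState A B u k ⬝ᵥ P *ᵥ ltiState A B u k) (fun k => ?_)
    (by simp [ltiState]) (by simpa using hP.posSemidef.dotProduct_mulVec_nonneg _)
  rw [sqNorm_eq_dotProduct_self, sqNorm_eq_dotProduct_self]
  exact dissipation_ineq_of_boundedRealMatrix A B C D P γ hε.le hquad (ltiState A B u k) (u k)

theorem stmt2 {n m p : ℕ} (hn : 1 ≤ n) (hm : 1 ≤ m) (hp : 1 ≤ p)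
    (A : Matrix (Fin n) (Fin n) ℝ) (B : Matrix (Fin n) (Fin m) ℝ)
    (C : Matrix (Fin p) (Fin n) ℝ) (D : Matrix (Fin p) (Fin m) ℝ)
    (γ : ℝ) (hγ : 0 < γ) (P : Matrix (Fin n) (Fin n) ℝ) (hP : P.PosDef)
    (hLMI : (-(Matrix.fromBlocks
        (Aᵀ * P * A - P + Cᵀ * C) (Aᵀ * P * B + Cᵀ * D)
        (Bᵀ * P * A + Dᵀ * C) (Bᵀ * P * B + Dᵀ * D - γ ^ 2 • 1))).PosDef) :
    ∃ ε > 0, ∀ (u : ℕ → Fin m → ℝ) (T : ℕ),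
      ∑ k ∈ Finset.range T, sqNorm (ltiOutput A B C D u k)
        ≤ (γ ^ 2 - ε) * ∑ k ∈ Finset.range T, sqNorm (u k) :=
  stmt2_general A B C D γ P hP hLMI
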